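/- For all n ≥ 0 and all x, the Daehee polynomial of the second kind satisfies Ď_n(x) = B_n^{(n+2)}(2-x), where B_n^{(α)} is the Bernoulli polynomial of order α. -/

import Mathlib

open PowerSeries Finset

noncomputable def logOneAdd : PowerSeries ℚ :=
  PowerSeries.mk fun k => if k = 0 then 0 else (-1 : ℚ)^(k+1) / k

noncomputable def onePow (x : ℚ) : PowerSeries ℚ :=
  PowerSeries.mk fun k => (∏ i ∈ Finset.range k, (x - (i : ℚ))) / (Nat.factorial k : ℚ)

noncomputable def expX (x : ℚ) : PowerSeries ℚ :=
  PowerSeries.mk fun k => x ^ k / (Nat.factorial k : ℚ)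

/-!
Write `L = log (1 + X)`. Substituting `t = L` into the generating function of `B_n^{(n+2)}(y)`
and using `exp L = 1 + X` turns it into `(L / X)^(n+2) (1 + X)^y`. Lagrange inversion reads off
the `n`-th coefficient of a series `B` from its composite as `[X^n] B(L) L' (X / L)^(n+1)`.
Since `L' = (1 + X)⁻¹`, for `y = 2 - x` this is `[X^n] (L / X) (1 + X)^(1 - x)`, and
`(L / X) (1 + X)^(1 - x)` is the generating function of `Ď_n(x)`.
-/

namespace PowerSeries

section CommRing

variable {R : Type*} [CommRing R]

theorem derivative_rescale (c : R) (f : R⟦X⟧) :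
    d⁄dX R (rescale c f) = C c * rescale c (d⁄dX R f) := by
  ext n
  simp only [coeff_derivative, coeff_rescale, coeff_C_mul, pow_succ]
  ring

theorem constantCoeff_subst_eq_constantCoeff {g : R⟦X⟧} (hg : constantCoeff g = 0)
    (f : R⟦X⟧) : constantCoeff (f.subst g) = constantCoeff f := by
  have hsub := constantCoeff_subst_eq_zero hg (f - C (constantCoeff f)) (by simp)
  rw [subst_sub (HasSubst.of_constantCoeff_zero' hg), subst_C, map_sub,
    MvPowerSeries.constantCoeff_C] at hsub
  exact sub_eq_zero.mp hsub

end CommRing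

section Binomial

variable {R : Type*} [CommRing R] [BinomialRing R]

theorem derivative_binomialSeries (c : R) :
    d⁄dX R (binomialSeries R c) = C c * binomialSeries R (c - 1) := by
  ext n
  have h := Ring.choose_smul_choose c (Nat.le_add_left 1 n)
  simp only [Nat.choose_one_right, Ring.choose_one_right, add_tsub_cancel_right, Nat.cast_one,
    nsmul_eq_mul, Nat.cast_add] at h
  simpa [coeff_derivative, mul_comm] using h

theorem binomialSeries_one : binomialSeries R (1 : R) = 1 + X := by
  simpa using binomialSeries_nat (A := R) (R := R) 1

theorem one_add_X_mul_derivative_binomialSeries (c : R) :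
    (1 + X) * d⁄dX R (binomialSeries R c) = C c * binomialSeries R c := by
  rw [derivative_binomialSeries, mul_left_comm, ← binomialSeries_one, ← binomialSeries_add,
    add_sub_cancel]

end Binomial

theorem eq_of_one_add_X_mul_derivative_eq {R : Type*} [CommRing R] [IsAddTorsionFree R] (c : R)
    {f g : R⟦X⟧} (hf : (1 + X) * d⁄dX R f = C c * f) (hg : (1 + X) * d⁄dX R g = C c * g)
    (h0 : constantCoeff f = constantCoeff g) : f = g := by
  rw [← sub_eq_zero]
  set h := f - g
  have hh : d⁄dX R h + X * d⁄dX R h = C c * h := by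
    rw [← one_add_mul, map_sub, mul_sub, hf, hg, mul_sub]
  ext n
  induction n with
  | zero => simp [h, h0]
  | succ n ih =>
    have hX : coeff n (X * d⁄dX R h) = 0 := by
      cases n with
      | zero => simp
      | succ m => rw [coeff_succ_X_mul, coeff_derivative, ih, map_zero, zero_mul]
    have hn := congrArg (coeff n) hh
    rw [map_add, hX, add_zero, coeff_derivative, coeff_C_mul, ih, map_zero, mul_zero,
      ← Nat.cast_succ, mul_comm, ← nsmul_eq_mul] at hn
    rw [map_zero]
    exact (smul_eq_zero_iff_right n.succ_ne_zero).mp hn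

section Lagrange

variable {R : Type*} [CommRing R] [IsAddTorsionFree R] {v u : R⟦X⟧}

theorem coeff_derivative_X_mul_mul_pow_succ (hvu : v * u = 1) (r : ℕ) :
    coeff r (d⁄dX R (X * v) * u ^ (r + 1)) = if r = 0 then 1 else 0 := by
  have hgu : X * v * u = X := by rw [mul_assoc, hvu, mul_one]
  have hd : d⁄dX R (X * v) * u = 1 - X * v * d⁄dX R u := by
    have h := congrArg (d⁄dX R) hgu
    rw [Derivation.leibniz, derivative_X, smul_eq_mul, smul_eq_mul] at h
    rw [← h]
    ring
  cases r with
  | zero =>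
    rw [zero_add, pow_one, hd, if_pos rfl, mul_assoc, map_sub, coeff_zero_X_mul, sub_zero,
      coeff_zero_one]
  | succ s =>
    -- `(s + 1) u^s u'` is the derivative of `u^(s+1)`, so the two terms below cancel.
    have hsplit : d⁄dX R (X * v) * u ^ (s + 2) = u ^ (s + 1) - X * (u ^ s * d⁄dX R u) := by
      calc d⁄dX R (X * v) * u ^ (s + 2) = u ^ (s + 1) * (d⁄dX R (X * v) * u) := by ring
        _ = u ^ (s + 1) - (X * v * u) * (u ^ s * d⁄dX R u) := by rw [hd]; ring
        _ = u ^ (s + 1) - X * (u ^ s * d⁄dX R u) := by rw [hgu]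
    have hres : (s + 1) • coeff s (u ^ s * d⁄dX R u) = (s + 1) • coeff (s + 1) (u ^ (s + 1)) := by
      have h := congrArg (coeff s) (Derivation.leibniz_pow (d⁄dX R) u (s + 1))
      rw [coeff_derivative, add_tsub_cancel_right, smul_eq_mul, map_nsmul] at h
      rw [← h, nsmul_eq_mul, mul_comm]
      push_cast
      ring
    rw [hsplit, map_sub, coeff_succ_X_mul, nsmul_right_injective s.succ_ne_zero hres, sub_self,
      if_neg s.succ_ne_zero]

theorem coeff_X_mul_pow_mul_derivative_mul_pow (hvu : v * u = 1) {k n : ℕ} (hkn : k ≤ n) :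
    coeff n ((X * v) ^ k * d⁄dX R (X * v) * u ^ (n + 1)) = if k = n then 1 else 0 := by
  have h : (X * v) ^ k * d⁄dX R (X * v) * u ^ (n + 1)
      = X ^ k * (d⁄dX R (X * v) * u ^ (n - k + 1)) := by
    rw [show n + 1 = k + (n - k + 1) by omega, pow_add, mul_pow]
    calc X ^ k * v ^ k * d⁄dX R (X * v) * (u ^ k * u ^ (n - k + 1))
        = X ^ k * ((v * u) ^ k * (d⁄dX R (X * v) * u ^ (n - k + 1))) := by ring
      _ = _ := by rw [hvu, one_pow, one_mul]
  rw [h, coeff_X_pow_mul', if_pos hkn, coeff_derivative_X_mul_mul_pow_succ hvu]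
  simp only [Nat.sub_eq_zero_iff_le, hkn.ge_iff_eq]

theorem coeff_subst_mul_derivative_mul_pow (hvu : v * u = 1) (f : R⟦X⟧) (n : ℕ) :
    coeff n (f.subst (X * v) * d⁄dX R (X * v) * u ^ (n + 1)) = coeff n f := by
  have hsubst : HasSubst (X * v) := HasSubst.of_constantCoeff_zero' (by simp)
  set F := mk fun i ↦ coeff (i + (n + 1)) f
  have hsplit : f.subst (X * v) * d⁄dX R (X * v) * u ^ (n + 1)
      = X ^ (n + 1) * (v ^ (n + 1) * F.subst (X * v) * d⁄dX R (X * v) * u ^ (n + 1))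
        + ∑ k ∈ range (n + 1), C (coeff k f) * ((X * v) ^ k * d⁄dX R (X * v) * u ^ (n + 1)) := by
    conv_lhs => rw [eq_X_pow_mul_shift_add_trunc (n + 1) f, subst_add hsubst, subst_mul hsubst,
      subst_pow hsubst, subst_X hsubst, subst_coe hsubst, Polynomial.aeval_def,
      eval₂_trunc_eq_sum_range]
    simp only [add_mul, sum_mul, mul_pow, mul_assoc]
    rfl
  rw [hsplit, map_add, coeff_X_pow_mul', if_neg (by omega), zero_add, map_sum]
  simp only [coeff_C_mul]
  rw [sum_congr rfl fun k hk ↦ by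
    rw [coeff_X_mul_pow_mul_derivative_mul_pow hvu (mem_range_succ_iff.mp hk)]]
  simp

end Lagrange

noncomputable def logDivX (A : Type*) [CommRing A] [Algebra ℚ A] : A⟦X⟧ :=
  mk fun n ↦ coeff (n + 1) (log A)

theorem X_mul_logDivX (A : Type*) [CommRing A] [Algebra ℚ A] : X * logDivX A = log A := by
  conv_rhs => rw [eq_X_mul_shift_add_const (log A), constantCoeff_log, map_zero, add_zero]
  rfl

theorem logDivX_mul_inv (K : Type*) [Field K] [Algebra ℚ K] : logDivX K * (logDivX K)⁻¹ = 1 :=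
  PowerSeries.mul_inv_cancel _ (by simp [logDivX, ← coeff_zero_eq_constantCoeff_apply])

section Log

-- `Algebra ℚ K` is an argument, not derived from `CharZero K`, so that for `K = ℚ` these
-- lemmas are about `log ℚ` and `exp ℚ` taken with `Algebra.id ℚ`.
variable {K : Type*} [Field K] [CharZero K] [Algebra ℚ K]

theorem derivative_log : d⁄dX K (log K) = binomialSeries K (-1 : K) := by
  ext n
  simp [deriv_log, Ring.choose_neg, Ring.choose_natCast, Units.smul_def]

theorem one_add_X_mul_derivative_log : (1 + X) * d⁄dX K (log K) = 1 := by
  rw [derivative_log, ← binomialSeries_one, ← binomialSeries_add, add_neg_cancel,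
    binomialSeries_zero]

-- Both sides solve `(1 + X) f' = c f` with `f(0) = 1`.
theorem rescale_exp_subst_log (c : K) :
    (rescale c (exp K)).subst (log K) = binomialSeries K c := by
  refine eq_of_one_add_X_mul_derivative_eq c ?_ (one_add_X_mul_derivative_binomialSeries c) ?_
  · rw [derivative_subst HasSubst.log, derivative_rescale, derivative_exp,
      subst_mul HasSubst.log, subst_C, mul_left_comm, one_add_X_mul_derivative_log, mul_one]
    rfl
  · rw [constantCoeff_subst_eq_constantCoeff constantCoeff_log, binomialSeries_constantCoeff]
    simp [← coeff_zero_eq_constantCoeff_apply, coeff_rescale]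

theorem eq_logDivX_mul_binomialSeries_of_mul_X_mul {D : K⟦X⟧} {x : K}
    (h : D * X * binomialSeries K x = (1 + X) * log K) :
    D = logDivX K * binomialSeries K (1 - x) := by
  rw [← X_mul_logDivX] at h
  have hX : X * (D * binomialSeries K x) = X * ((1 + X) * logDivX K) := by linear_combination h
  have h' := congrArg (· * binomialSeries K (-x)) (X_mul_cancel hX)
  simp only [mul_assoc, ← binomialSeries_add, add_neg_cancel, binomialSeries_zero, mul_one] at h'
  rw [h', ← binomialSeries_one, sub_eq_add_neg, binomialSeries_add]
  ring

theorem subst_log_eq_of_mul_exp_sub_one_pow {B : K⟦X⟧} {α : ℕ} {y : K}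
    (h : B * (exp K - 1) ^ α = X ^ α * rescale y (exp K)) :
    B.subst (log K) = logDivX K ^ α * binomialSeries K y := by
  have hexp : (exp K).subst (log K) = 1 + X := by
    simpa [binomialSeries_one] using rescale_exp_subst_log (1 : K)
  have hL : log K ^ α = X ^ α * logDivX K ^ α := by rw [← X_mul_logDivX, mul_pow]
  have h' := congrArg (substAlgHom (HasSubst.log (A := K))) h
  simp only [map_mul, map_pow, map_sub, map_one, coe_substAlgHom] at h'
  rw [hexp, subst_X HasSubst.log, rescale_exp_subst_log, add_sub_cancel_left, hL, mul_comm,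
    mul_assoc] at h'
  exact X_pow_mul_cancel h'

theorem logDivX_pow_mul_binomialSeries_mul_inv_pow (n : ℕ) (y : K) :
    logDivX K ^ (n + 2) * binomialSeries K y * binomialSeries K (-1 : K) * (logDivX K)⁻¹ ^ (n + 1)
      = logDivX K * binomialSeries K (y - 1) := by
  calc _ = logDivX K * (logDivX K * (logDivX K)⁻¹) ^ (n + 1) * binomialSeries K (y + -1) := by
        rw [binomialSeries_add]; ring
    _ = _ := by rw [logDivX_mul_inv, one_pow, mul_one, ← sub_eq_add_neg]

end Log

end PowerSeries

theorem logOneAdd_eq_log : logOneAdd = log ℚ := by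
  ext k
  simp [logOneAdd, coeff_log]

theorem onePow_eq_binomialSeries (x : ℚ) : onePow x = PowerSeries.binomialSeries ℚ x := by
  ext k
  rw [onePow, coeff_mk, binomialSeries_coeff, Ring.choose_eq_smul,
    ← Polynomial.eval₂_smulOneHom_eq_smeval, ← descPochhammer_eval_eq_prod_range,
    ← descPochhammer_map (algebraMap ℤ ℚ), Polynomial.eval_map,
    Subsingleton.elim RingHom.smulOneHom (algebraMap ℤ ℚ)]
  simp [div_eq_inv_mul]

theorem expX_eq_rescale_exp (y : ℚ) : expX y = rescale y (exp ℚ) := by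
  ext k
  simp [expX, coeff_exp, div_eq_mul_inv]

theorem daehee2_poly_eq_higher_bernoulli (Dhp : ℕ → ℚ → ℚ) (OB : ℕ → ℚ → ℕ → ℚ)
    (hDhp : ∀ x : ℚ, PowerSeries.mk (fun n => Dhp n x / (Nat.factorial n : ℚ)) * PowerSeries.X * onePow x = (1 + PowerSeries.X) * logOneAdd) (hOB : ∀ (α : ℕ) (x : ℚ), PowerSeries.mk (fun n => OB α x n / (Nat.factorial n : ℚ)) * (PowerSeries.exp ℚ - 1) ^ α = PowerSeries.X ^ α * expX x) :
    ∀ (n : ℕ) (x : ℚ), Dhp n x = OB (n + 2) (2 - x) n := by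
  intro n x
  have hD := eq_logDivX_mul_binomialSeries_of_mul_X_mul
    (D := mk fun k ↦ Dhp k x / (k.factorial : ℚ)) <| by
      simpa only [onePow_eq_binomialSeries, logOneAdd_eq_log] using hDhp x
  have hB := subst_log_eq_of_mul_exp_sub_one_pow
    (B := mk fun k ↦ OB (n + 2) (2 - x) k / (k.factorial : ℚ)) <| by
      simpa only [expX_eq_rescale_exp] using hOB (n + 2) (2 - x)
  have hcoeff := coeff_subst_mul_derivative_mul_pow (logDivX_mul_inv ℚ)
    (mk fun k ↦ OB (n + 2) (2 - x) k / (k.factorial : ℚ)) n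
  rw [X_mul_logDivX, hB, derivative_log, logDivX_pow_mul_binomialSeries_mul_inv_pow,
    show (2 : ℚ) - x - 1 = 1 - x by ring, ← hD] at hcoeff
  simpa [Nat.factorial_ne_zero] using hcoeff
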